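/- In any ontological model for ℂ² with D injective, for every unit vector ψ ∈ ℂ² and every unit vector ψ⊥ orthogonal to ψ: ρ₁(Λ_ψ ∩ Λ_{ψ⊥}) = 0, where ρ₁ := 2·D⁻¹(½I) and Λ_φ := {λ ∈ Λ : p_{P_φ}(λ) = 1}. -/

import Mathlib

open MeasureTheory
open scoped NNReal ENNReal ComplexOrder

noncomputable section

/-- The rank-one projection `|ψ⟩⟨ψ|` associated with a vector `ψ ∈ ℂⁿ`. -/
def proj {n : ℕ} (ψ : EuclideanSpace ℂ (Fin n)) : Matrix (Fin n) (Fin n) ℂ :=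
  Matrix.of fun i j => ψ i * (starRingEnd ℂ) (ψ j)

/-- An ontological model for `ℂⁿ`: a measurable space `Λ` of ontic states, a convex set `C`
of preparable probability measures on `Λ`, measurable response functions `p A : Λ → [0,1]`
for each effect `A` (`0 ≤ A ≤ 1` in the Loewner order), and a map `D` from `C` onto the set
of density matrices reproducing the quantum statistics. -/
structure OntModel (n : ℕ) (Λ : Type*) [MeasurableSpace Λ] where
  C : Set (Measure Λ)
  prob : ∀ ρ ∈ C, IsProbabilityMeasure ρ
  convexC : ∀ ρa ∈ C, ∀ ρb ∈ C, ∀ s : ℝ≥0, s ≤ 1 → s • ρa + (1 - s) • ρb ∈ C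
  p : Matrix (Fin n) (Fin n) ℂ → Λ → ℝ
  p_meas : ∀ A, Measurable (p A)
  p_nonneg : ∀ A l, 0 ≤ p A l
  p_le_one : ∀ A l, p A l ≤ 1
  D : Measure Λ → Matrix (Fin n) (Fin n) ℂ
  D_psd : ∀ ρ ∈ C, (D ρ).PosSemidef
  D_trace : ∀ ρ ∈ C, (D ρ).trace = 1
  D_surj : ∀ W : Matrix (Fin n) (Fin n) ℂ, W.PosSemidef → W.trace = 1 → ∃ ρ ∈ C, D ρ = W
  agree : ∀ ρ ∈ C, ∀ A : Matrix (Fin n) (Fin n) ℂ, A.PosSemidef → (1 - A).PosSemidef →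
    ((∫ l, p A l ∂ρ : ℝ) : ℂ) = (D ρ * A).trace

/-! The pure states `ρ_ψ`, `ρ_ψ⊥` exist by surjectivity of `D`. A matrix is determined by its
expectation values on rank-one projections, so `D` is affine on mixtures and
`D(½ρ_ψ + ½ρ_ψ⊥) = ½(P_ψ + P_ψ⊥) = ½I`; injectivity of `D` then gives `ρ₁ = ρ_ψ + ρ_ψ⊥`.
Finally `ρ_ψ(Λ_ψ⊥) = 0`, since `p_{P_ψ⊥} ≥ 0` has `ρ_ψ`-integral `tr(P_ψ P_ψ⊥) = 0`, and
symmetrically `ρ_ψ⊥(Λ_ψ) = 0`. -/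

section

open Matrix WithLp

variable {n : ℕ}

lemma proj_eq_vecMulVec (ψ : EuclideanSpace ℂ (Fin n)) :
    proj ψ = vecMulVec (ofLp ψ) (star (ofLp ψ)) := rfl

lemma posSemidef_proj (ψ : EuclideanSpace ℂ (Fin n)) : (proj ψ).PosSemidef :=
  posSemidef_vecMulVec_self_star _

lemma proj_mul_self {ψ : EuclideanSpace ℂ (Fin n)} (hψ : ‖ψ‖ = 1) : proj ψ * proj ψ = proj ψ := by
  have : star (ofLp ψ) ⬝ᵥ ofLp ψ = 1 := by
    rw [dotProduct_comm, ← EuclideanSpace.inner_eq_star_dotProduct, inner_self_eq_norm_sq_to_K, hψ]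
    simp
  rw [proj_eq_vecMulVec, vecMulVec_mul_vecMulVec, this, one_smul]

lemma posSemidef_one_sub_proj {ψ : EuclideanSpace ℂ (Fin n)} (hψ : ‖ψ‖ = 1) :
    (1 - proj ψ).PosSemidef := by
  have h : (1 - proj ψ)ᴴ * (1 - proj ψ) = 1 - proj ψ := by
    rw [conjTranspose_sub, conjTranspose_one, (posSemidef_proj ψ).isHermitian.eq, sub_mul,
      mul_sub, mul_sub, proj_mul_self hψ]
    simp
  exact h ▸ posSemidef_conjTranspose_mul_self (1 - proj ψ)

lemma trace_proj (ψ : EuclideanSpace ℂ (Fin n)) : (proj ψ).trace = (‖ψ‖ : ℂ) ^ 2 := by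
  rw [proj_eq_vecMulVec, trace_vecMulVec, ← EuclideanSpace.inner_eq_star_dotProduct,
    inner_self_eq_norm_sq_to_K]
  rfl

lemma trace_mul_proj (W : Matrix (Fin n) (Fin n) ℂ) (ψ : EuclideanSpace ℂ (Fin n)) :
    (W * proj ψ).trace = inner ℂ ψ (toLpLin 2 2 W ψ) := by
  rw [proj_eq_vecMulVec, mul_vecMulVec, trace_vecMulVec, EuclideanSpace.inner_eq_star_dotProduct,
    ofLp_toLpLin, toLin'_apply]

lemma trace_proj_mul_proj (ψ φ : EuclideanSpace ℂ (Fin n)) :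
    (proj ψ * proj φ).trace = inner ℂ φ ψ * inner ℂ ψ φ := by
  rw [proj_eq_vecMulVec, proj_eq_vecMulVec, vecMulVec_mul_vecMulVec, trace_vecMulVec,
    dotProduct_smul, EuclideanSpace.inner_eq_star_dotProduct,
    EuclideanSpace.inner_eq_star_dotProduct, smul_eq_mul, dotProduct_comm (star _), mul_comm]

theorem Matrix.ext_of_trace_mul_proj {W W' : Matrix (Fin n) (Fin n) ℂ}
    (h : ∀ ψ : EuclideanSpace ℂ (Fin n), ‖ψ‖ = 1 → (W * proj ψ).trace = (W' * proj ψ).trace) :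
    W = W' := by
  have hquad : ∀ x, inner ℂ x (toLpLin 2 2 W x) = inner ℂ x (toLpLin 2 2 W' x) := by
    intro x
    rcases eq_or_ne x 0 with rfl | hx
    · simp
    have hc : (‖x‖⁻¹ : ℂ) ≠ 0 := by simpa using hx
    have hu := h _ (norm_smul_inv_norm (𝕜 := ℂ) hx)
    simp only [trace_mul_proj, map_smul, inner_smul_left, inner_smul_right] at hu
    exact mul_left_cancel₀ ((map_ne_zero _).mpr hc) (mul_left_cancel₀ hc hu)
  refine (toLpLin 2 2).injective ((ext_inner_map _ _).mp fun x => ?_)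
  rw [← inner_conj_symm, hquad, inner_conj_symm]

lemma sum_proj_orthonormalBasis {ι : Type*} [Fintype ι]
    (b : OrthonormalBasis ι ℂ (EuclideanSpace ℂ (Fin n))) : ∑ i, proj (b i) = 1 := by
  refine ext_of_trace_mul_proj fun φ hφ => ?_
  simp only [Finset.sum_mul, trace_sum, trace_proj_mul_proj, b.sum_inner_mul_inner, one_mul,
    trace_proj, inner_self_eq_norm_sq_to_K]
  rfl

lemma proj_add_proj_of_orthonormal {ψ φ : EuclideanSpace ℂ (Fin 2)} (hψ : ‖ψ‖ = 1) (hφ : ‖φ‖ = 1)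
    (horth : inner ℂ ψ φ = (0 : ℂ)) : proj ψ + proj φ = 1 := by
  have hv : Orthonormal ℂ ![ψ, φ] := by
    simp [hψ, hφ, horth]
  let b := (basisOfOrthonormalOfCardEqFinrank hv (by simp)).toOrthonormalBasis
    (by rwa [coe_basisOfOrthonormalOfCardEqFinrank])
  have hb : ⇑b = ![ψ, φ] := by simp [b]
  simpa [hb] using sum_proj_orthonormalBasis b

namespace OntModel

variable {Λ : Type*} [MeasurableSpace Λ] (M : OntModel n Λ)

lemma integrable_p (A : Matrix (Fin n) (Fin n) ℂ) (μ : Measure Λ) [IsFiniteMeasure μ] :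
    Integrable (M.p A) μ :=
  .of_bound (M.p_meas A).aestronglyMeasurable 1 <| .of_forall fun l => by
    rw [Real.norm_of_nonneg (M.p_nonneg A l)]
    exact M.p_le_one A l

lemma integral_p_proj {ρ : Measure Λ} (hρ : ρ ∈ M.C) {ψ : EuclideanSpace ℂ (Fin n)}
    (hψ : ‖ψ‖ = 1) : ((∫ l, M.p (proj ψ) l ∂ρ : ℝ) : ℂ) = (M.D ρ * proj ψ).trace :=
  M.agree ρ hρ _ (posSemidef_proj ψ) (posSemidef_one_sub_proj hψ)

lemma exists_D_eq_proj {ψ : EuclideanSpace ℂ (Fin n)} (hψ : ‖ψ‖ = 1) :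
    ∃ ρ ∈ M.C, M.D ρ = proj ψ :=
  M.D_surj _ (posSemidef_proj ψ) (by simp [trace_proj, hψ])

variable {M} {ρa ρb : Measure Λ} {a b : ℝ≥0}

lemma smul_add_smul_mem (ha : ρa ∈ M.C) (hb : ρb ∈ M.C) (hab : a + b = 1) :
    a • ρa + b • ρb ∈ M.C := by
  obtain rfl : b = 1 - a := eq_tsub_of_add_eq ((add_comm b a).trans hab)
  exact M.convexC ρa ha ρb hb a (le_of_add_le_left hab.le)

lemma D_smul_add_smul (ha : ρa ∈ M.C) (hb : ρb ∈ M.C) (hab : a + b = 1) :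
    M.D (a • ρa + b • ρb) = (a : ℂ) • M.D ρa + (b : ℂ) • M.D ρb := by
  have := M.prob ρa ha
  have := M.prob ρb hb
  refine ext_of_trace_mul_proj fun φ hφ => ?_
  rw [← M.integral_p_proj (smul_add_smul_mem ha hb hab) hφ,
    integral_add_measure (M.integrable_p _ _) (M.integrable_p _ _),
    integral_smul_nnreal_measure, integral_smul_nnreal_measure, add_mul, trace_add, smul_mul,
    smul_mul, trace_smul, trace_smul, ← M.integral_p_proj ha hφ, ← M.integral_p_proj hb hφ]
  simp [NNReal.smul_def]

lemma measure_p_proj_eq_one_eq_zero {ρ : Measure Λ} (hρ : ρ ∈ M.C)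
    {ψ : EuclideanSpace ℂ (Fin n)} (hψ : ‖ψ‖ = 1) (h : (M.D ρ * proj ψ).trace = 0) :
    ρ {l | M.p (proj ψ) l = 1} = 0 := by
  have := M.prob ρ hρ
  have hint : ∫ l, M.p (proj ψ) l ∂ρ = 0 := by exact_mod_cast (M.integral_p_proj hρ hψ).trans h
  have hae := (integral_eq_zero_iff_of_nonneg (M.p_nonneg _) (M.integrable_p _ ρ)).mp hint
  simpa using ae_iff.mp <| hae.mono fun l (hl : M.p (proj ψ) l = 0) =>
    show M.p (proj ψ) l ≠ 1 by simp [hl]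

end OntModel

end

/-- In an ontological model for `ℂ²` with `D` injective, for orthogonal unit vectors
`ψ, ψ⊥`, the measure `ρ₁ = 2 · D⁻¹(½ I)` gives zero weight to `Λ_ψ ∩ Λ_{ψ⊥}`,
where `Λ_φ = {λ : p_{P_φ}(λ) = 1}`. -/
theorem rho1_inter_eq_zero {Λ : Type*} [MeasurableSpace Λ] (M : OntModel 2 Λ)
    (hinj : ∀ ρa ∈ M.C, ∀ ρb ∈ M.C, M.D ρa = M.D ρb → ρa = ρb)
    (ψ ψp : EuclideanSpace ℂ (Fin 2)) (hψ : ‖ψ‖ = 1) (hψp : ‖ψp‖ = 1)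
    (horth : inner ℂ ψ ψp = (0 : ℂ))
    (ρhalf : Measure Λ) (hρhalf : ρhalf ∈ M.C)
    (hDhalf : M.D ρhalf = (1 / 2 : ℂ) • 1) :
    ((2 : ℝ≥0) • ρhalf) ({l | M.p (proj ψ) l = 1} ∩ {l | M.p (proj ψp) l = 1}) = 0 := by
  obtain ⟨ρψ, hρψ, hDψ⟩ := M.exists_D_eq_proj hψ
  obtain ⟨ρψp, hρψp, hDψp⟩ := M.exists_D_eq_proj hψp
  have hhalf : (1 / 2 : ℝ≥0) + 1 / 2 = 1 := add_halves 1
  have hmix : (1 / 2 : ℝ≥0) • ρψ + (1 / 2 : ℝ≥0) • ρψp = ρhalf := by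
    refine hinj _ (OntModel.smul_add_smul_mem hρψ hρψp hhalf) _ hρhalf ?_
    rw [OntModel.D_smul_add_smul hρψ hρψp hhalf, hDψ, hDψp, hDhalf, ← smul_add,
      proj_add_proj_of_orthonormal hψ hψp horth]
    simp
  have hψ_null : ρψ {l | M.p (proj ψp) l = 1} = 0 :=
    OntModel.measure_p_proj_eq_one_eq_zero hρψ hψp
      (by rw [hDψ, trace_proj_mul_proj, horth, mul_zero])
  have hψp_null : ρψp {l | M.p (proj ψ) l = 1} = 0 :=
    OntModel.measure_p_proj_eq_one_eq_zero hρψp hψ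
      (by rw [hDψp, trace_proj_mul_proj, horth, zero_mul])
  have htwo : (2 : ℝ≥0) • ρhalf = ρψ + ρψp := by
    rw [← hmix, smul_add, smul_smul, smul_smul]
    norm_num
  rw [htwo, Measure.add_apply, measure_mono_null Set.inter_subset_right hψ_null,
    measure_mono_null Set.inter_subset_left hψp_null, add_zero]
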